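/- arXiv:1003.4855 — 2 statements merged into one kernel-verified Lean document; each statement's English description precedes it below -/
import Mathlib

section
/- For any connected graphs G₁ and G₂, pd(G₁ × G₂) ≤ pd(G₁) + pd(G₂), where × denotes the Cartesian product of graphs. -/
open SimpleGraph

/-- Distance from a vertex to a set of vertices: `min {d(v,x) : x ∈ P}`. -/
noncomputable def distToSet {V : Type*} (G : SimpleGraph V) (v : V) (P : Set V) : ℕ :=
  sInf ((G.dist v) '' P)

/-- `S` is a resolving set of `G`. -/
def IsResolvingSet {V : Type*} (G : SimpleGraph V) (S : Set V) : Prop :=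
  ∀ u v : V, u ≠ v → ∃ w ∈ S, G.dist u w ≠ G.dist v w

/-- The metric dimension of `G`. -/
noncomputable def metricDim {V : Type*} (G : SimpleGraph V) : ℕ :=
  sInf {n | ∃ S : Finset V, S.card = n ∧ IsResolvingSet G ↑S}

/-- `Π` is a resolving partition of `G`: a partition of the vertex set such that
distinct vertices have distinct vectors of distances to the parts. -/
def IsResolvingPartition {V : Type*} (G : SimpleGraph V) (Pi : Set (Set V)) : Prop :=
  Setoid.IsPartition Pi ∧
    ∀ u v : V, u ≠ v → ∃ P ∈ Pi, distToSet G u P ≠ distToSet G v P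

/-- The partition dimension of `G`. -/
noncomputable def partitionDim {V : Type*} (G : SimpleGraph V) : ℕ :=
  sInf {n | ∃ Pi : Finset (Set V), Pi.card = n ∧ IsResolvingPartition G ↑Pi}

/-!
In `G₁ □ G₂` distances add up coordinatewise, so the distance from `(u, v)` to a box `A ×ˢ B`
is `d(u, A) + d(v, B)`. Take optimal resolving partitions `Π₁` of `G₁` and `Π₂` of `G₂` and a part
`Q ∈ Π₂`. Cutting the strip `V₁ ×ˢ Q` along `Π₁` and keeping every other strip `V₁ ×ˢ B` whole gives
a partition with `|Π₁| + |Π₂| - 1` parts. It is resolving: vertices in the same row are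
separated by a box `A ×ˢ Q`, vertices in different rows by the strip `V₁ ×ˢ B` of a part `B`
separating the rows, or, if that part is `Q`, by the box `A ×ˢ Q` through the vertex closer to `Q`.
-/

open Finset

theorem SimpleGraph.dist_boxProd {α β : Type*} {G : SimpleGraph α} {H : SimpleGraph β}
    {x y : α × β} (h₁ : G.Reachable x.1 y.1) (h₂ : H.Reachable x.2 y.2) :
    (G □ H).dist x y = G.dist x.1 y.1 + H.dist x.2 y.2 := by
  rw [dist, edist_boxProd,
    ENat.toNat_add (edist_ne_top_iff_reachable.2 h₁) (edist_ne_top_iff_reachable.2 h₂)]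
  rfl

section distToSet

variable {V : Type*} {G : SimpleGraph V} {v x : V} {P : Set V}

theorem distToSet_le_dist (hx : x ∈ P) : distToSet G v P ≤ G.dist v x :=
  Nat.sInf_le ⟨x, hx, rfl⟩

theorem exists_mem_dist_eq_distToSet (hP : P.Nonempty) : ∃ x ∈ P, G.dist v x = distToSet G v P :=
  Nat.sInf_mem (hP.image _)

theorem distToSet_eq_zero_of_mem (hv : v ∈ P) : distToSet G v P = 0 :=
  Nat.eq_zero_of_le_zero <| (distToSet_le_dist hv).trans_eq G.dist_self

theorem distToSet_singleton : distToSet G v {x} = G.dist v x := by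
  simp [distToSet]

end distToSet

section partitionDim

variable {V : Type*} {G : SimpleGraph V}

theorem partitionDim_le_card {c : Finset (Set V)} (hc : IsResolvingPartition G ↑c) :
    partitionDim G ≤ #c :=
  Nat.sInf_le ⟨c, rfl, hc⟩

variable [Fintype V]

theorem isResolvingPartition_singletons [DecidableEq (Set V)] (hG : G.Connected) :
    IsResolvingPartition G ↑(univ.image fun v : V ↦ ({v} : Set V)) := by
  rw [coe_image, coe_univ, Set.image_univ]
  refine ⟨Set.pairwiseDisjoint_range_singleton.isPartition_of_exists_of_ne_empty
    (fun v ↦ ⟨{v}, ⟨v, rfl⟩, rfl⟩) fun ⟨v, hv⟩ ↦ Set.singleton_ne_empty v hv, ?_⟩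
  intro u v huv
  refine ⟨{u}, ⟨u, rfl⟩, ?_⟩
  rw [distToSet_singleton, distToSet_singleton, G.dist_self]
  exact (hG.pos_dist_of_ne huv.symm).ne

theorem exists_isResolvingPartition_card_eq_partitionDim (hG : G.Connected) :
    ∃ c : Finset (Set V), #c = partitionDim G ∧ IsResolvingPartition G ↑c := by
  classical
  exact Nat.sInf_mem (s := {n | ∃ c : Finset (Set V), #c = n ∧ IsResolvingPartition G ↑c})
    ⟨_, _, rfl, isResolvingPartition_singletons hG⟩

end partitionDim

section productPartition

variable {α β : Type*}

open Classical in
noncomputable def productPartition (c₁ : Finset (Set α)) (c₂ : Finset (Set β)) (Q : Set β) :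
    Finset (Set (α × β)) :=
  c₁.image (· ×ˢ Q) ∪ (c₂.erase Q).image (Set.univ ×ˢ ·)

variable {c₁ : Finset (Set α)} {c₂ : Finset (Set β)} {Q : Set β} {S : Set (α × β)}

theorem mem_productPartition :
    S ∈ productPartition c₁ c₂ Q ↔
      (∃ A ∈ c₁, A ×ˢ Q = S) ∨ ∃ B ∈ c₂, B ≠ Q ∧ Set.univ ×ˢ B = S := by
  simp only [productPartition, mem_union, mem_image, mem_erase, and_assoc,
    and_left_comm (a := _ ≠ Q)]

theorem card_productPartition_le : #(productPartition c₁ c₂ Q) ≤ #c₁ + #c₂ :=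
  calc #(productPartition c₁ c₂ Q) ≤ #c₁ + #(c₂.erase Q) :=
        (card_union_le _ _).trans (add_le_add card_image_le card_image_le)
    _ ≤ #c₁ + #c₂ := Nat.add_le_add_left card_erase_le _

theorem isPartition_productPartition [Nonempty α] (h₁ : Setoid.IsPartition (c₁ : Set (Set α)))
    (h₂ : Setoid.IsPartition (c₂ : Set (Set β))) (hQ : Q ∈ c₂) :
    Setoid.IsPartition (productPartition c₁ c₂ Q : Set (Set (α × β))) := by
  refine Set.PairwiseDisjoint.isPartition_of_exists_of_ne_empty ?_ ?_ ?_
  · rintro S hS T hT hST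
    rw [mem_coe, mem_productPartition] at hS hT
    rcases hS with ⟨A, hA, rfl⟩ | ⟨B, hB, hBQ, rfl⟩ <;>
      rcases hT with ⟨A', hA', rfl⟩ | ⟨B', hB', hB'Q, rfl⟩
    · exact Set.disjoint_prod.2 (.inl (h₁.pairwiseDisjoint hA hA' fun h ↦ hST (by rw [h])))
    · exact Set.disjoint_prod.2 (.inr (h₂.pairwiseDisjoint hQ hB' hB'Q.symm))
    · exact Set.disjoint_prod.2 (.inr (h₂.pairwiseDisjoint hB hQ hBQ))
    · exact Set.disjoint_prod.2 (.inr (h₂.pairwiseDisjoint hB hB' fun h ↦ hST (by rw [h])))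
  · rintro ⟨u, v⟩
    obtain ⟨B, ⟨hB, hvB⟩, -⟩ := h₂.2 v
    by_cases hBQ : B = Q
    · obtain ⟨A, ⟨hA, huA⟩, -⟩ := h₁.2 u
      exact ⟨A ×ˢ Q, mem_productPartition.2 (.inl ⟨A, hA, rfl⟩), huA, hBQ ▸ hvB⟩
    · exact ⟨Set.univ ×ˢ B, mem_productPartition.2 (.inr ⟨B, hB, hBQ, rfl⟩), trivial, hvB⟩
  · intro h
    rw [mem_coe, mem_productPartition] at h
    rcases h with ⟨A, hA, hAQ⟩ | ⟨B, hB, -, hUB⟩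
    · exact ((Setoid.nonempty_of_mem_partition h₁ hA).prod
        (Setoid.nonempty_of_mem_partition h₂ hQ)).ne_empty hAQ
    · exact (Set.univ_nonempty.prod (Setoid.nonempty_of_mem_partition h₂ hB)).ne_empty hUB

end productPartition

section boxProd

variable {α β : Type*} {G₁ : SimpleGraph α} {G₂ : SimpleGraph β}
  {c₁ : Finset (Set α)} {c₂ : Finset (Set β)} {Q : Set β}

theorem distToSet_prod (hG₁ : G₁.Connected) (hG₂ : G₂.Connected) (u : α) (v : β)
    {A : Set α} {B : Set β} (hA : A.Nonempty) (hB : B.Nonempty) :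
    distToSet (G₁ □ G₂) (u, v) (A ×ˢ B) = distToSet G₁ u A + distToSet G₂ v B := by
  apply le_antisymm
  · obtain ⟨a, ha, hua⟩ := exists_mem_dist_eq_distToSet (G := G₁) (v := u) hA
    obtain ⟨b, hb, hvb⟩ := exists_mem_dist_eq_distToSet (G := G₂) (v := v) hB
    calc distToSet (G₁ □ G₂) (u, v) (A ×ˢ B) ≤ (G₁ □ G₂).dist (u, v) (a, b) :=
          distToSet_le_dist (Set.mk_mem_prod ha hb)
      _ = distToSet G₁ u A + distToSet G₂ v B := by
          rw [SimpleGraph.dist_boxProd (hG₁ u a) (hG₂ v b), hua, hvb]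
  · refine le_csInf ((hA.prod hB).image _) ?_
    rintro _ ⟨⟨a, b⟩, ⟨ha, hb⟩, rfl⟩
    rw [SimpleGraph.dist_boxProd (hG₁ u a) (hG₂ v b)]
    exact add_le_add (distToSet_le_dist ha) (distToSet_le_dist hb)

theorem distToSet_prod_lt_of_mem (hG₁ : G₁.Connected) (hG₂ : G₂.Connected) {A : Set α}
    {B : Set β} (hB : B.Nonempty) {u u' : α} {v v' : β} (hu : u ∈ A)
    (hlt : distToSet G₂ v B < distToSet G₂ v' B) :
    distToSet (G₁ □ G₂) (u, v) (A ×ˢ B) < distToSet (G₁ □ G₂) (u', v') (A ×ˢ B) := by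
  rw [distToSet_prod hG₁ hG₂ _ _ ⟨u, hu⟩ hB, distToSet_prod hG₁ hG₂ _ _ ⟨u, hu⟩ hB,
    distToSet_eq_zero_of_mem hu]
  omega

theorem isResolvingPartition_productPartition (hG₁ : G₁.Connected) (hG₂ : G₂.Connected)
    (h₁ : IsResolvingPartition G₁ c₁) (h₂ : IsResolvingPartition G₂ c₂) (hQ : Q ∈ c₂) :
    IsResolvingPartition (G₁ □ G₂) (productPartition c₁ c₂ Q) := by
  have := hG₁.nonempty
  have hne₁ {A} (hA : A ∈ c₁) : A.Nonempty := Setoid.nonempty_of_mem_partition h₁.1 hA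
  have hne₂ {B} (hB : B ∈ c₂) : B.Nonempty := Setoid.nonempty_of_mem_partition h₂.1 hB
  have box_mem {A} (hA : A ∈ c₁) : A ×ˢ Q ∈ (productPartition c₁ c₂ Q : Set (Set (α × β))) :=
    mem_productPartition.2 (.inl ⟨A, hA, rfl⟩)
  refine ⟨isPartition_productPartition h₁.1 h₂.1 hQ, ?_⟩
  rintro ⟨u, v⟩ ⟨u', v'⟩ huv
  obtain rfl | hvv := eq_or_ne v v'
  · obtain ⟨A, hA, hAd⟩ := h₁.2 u u' fun h ↦ huv (by rw [h])
    refine ⟨A ×ˢ Q, box_mem hA, ?_⟩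
    rw [distToSet_prod hG₁ hG₂ _ _ (hne₁ hA) (hne₂ hQ),
      distToSet_prod hG₁ hG₂ _ _ (hne₁ hA) (hne₂ hQ)]
    omega
  obtain ⟨B, hB, hBd⟩ := h₂.2 v v' hvv
  obtain rfl | hBQ := eq_or_ne B Q
  · rcases hBd.lt_or_gt with hlt | hlt
    · obtain ⟨A, ⟨hA, huA⟩, -⟩ := h₁.1.2 u
      exact ⟨A ×ˢ B, box_mem hA, (distToSet_prod_lt_of_mem hG₁ hG₂ (hne₂ hQ) huA hlt).ne⟩
    · obtain ⟨A, ⟨hA, huA⟩, -⟩ := h₁.1.2 u'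
      exact ⟨A ×ˢ B, box_mem hA, (distToSet_prod_lt_of_mem hG₁ hG₂ (hne₂ hQ) huA hlt).ne'⟩
  · refine ⟨Set.univ ×ˢ B, mem_productPartition.2 (.inr ⟨B, hB, hBQ, rfl⟩), ?_⟩
    rw [distToSet_prod hG₁ hG₂ _ _ Set.univ_nonempty (hne₂ hB),
      distToSet_prod hG₁ hG₂ _ _ Set.univ_nonempty (hne₂ hB),
      distToSet_eq_zero_of_mem (Set.mem_univ u), distToSet_eq_zero_of_mem (Set.mem_univ u')]
    simpa using hBd

end boxProd

theorem stmt_3 {V₁ V₂ : Type*} [Fintype V₁] [Fintype V₂]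
    (G₁ : SimpleGraph V₁) (G₂ : SimpleGraph V₂)
    (hG₁ : G₁.Connected) (hG₂ : G₂.Connected) :
    partitionDim (G₁.boxProd G₂) ≤ partitionDim G₁ + partitionDim G₂ := by
  obtain ⟨c₁, hc₁, h₁⟩ := exists_isResolvingPartition_card_eq_partitionDim hG₁
  obtain ⟨c₂, hc₂, h₂⟩ := exists_isResolvingPartition_card_eq_partitionDim hG₂
  obtain ⟨Q, ⟨hQ, -⟩, -⟩ := h₂.1.2 hG₂.nonempty.some
  calc partitionDim (G₁.boxProd G₂) ≤ #(productPartition c₁ c₂ Q) :=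
        partitionDim_le_card (isResolvingPartition_productPartition hG₁ hG₂ h₁ h₂ hQ)
    _ ≤ #c₁ + #c₂ := card_productPartition_le
    _ = partitionDim G₁ + partitionDim G₂ := by rw [hc₁, hc₂]
end

section
/- Let Π = {A₁,...,A_k} be a resolving partition of a connected graph G₁ and S = {u₁,...,u_t} a resolving set of a connected graph G₂. Then the partition of V(G₁)×V(G₂) consisting of the sets A₁×{u₁}, A₂×{u₁}, ..., A_k×{u₁}, A₁×{u₂}, ..., A₁×{u_t}, together with the set C of all remaining vertices, is a resolving partition of G₁ × G₂. -/
/-!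
Distances in `G₁ □ G₂` add up coordinatewise, so the distance from `(a, b)` to a part `P × {w}` is
`d(a, P) + d(b, w)`. If `(a, b)` and `(c, d)` have the same distances to the parts `Aᵢ × {u₀}`, then
looking at the parts of `A` containing `a` and `c` gives `d(b, u₀) = d(d, u₀)`, hence `a` and `c` have
the same distances to every `Aᵢ` and `a = c`; the parts `A₀ × {u_j}` then show that `b` and `d` have the
same distances to every `u_j`, so `b = d`.
-/

open SimpleGraph

namespace SimpleGraph

lemma Connected.dist_boxProd {V₁ V₂ : Type*} {G : SimpleGraph V₁} {H : SimpleGraph V₂}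
    (hG : G.Connected) (hH : H.Connected) (x y : V₁ × V₂) :
    (G □ H).dist x y = G.dist x.1 y.1 + H.dist x.2 y.2 := by
  rw [dist, edist_boxProd]
  exact ENat.toNat_add (edist_ne_top_iff_reachable.2 (hG x.1 y.1))
    (edist_ne_top_iff_reachable.2 (hH x.2 y.2))

end SimpleGraph

lemma distToSet_eq_zero_of_mem_s6 {V : Type*} {G : SimpleGraph V} {v : V} {P : Set V} (h : v ∈ P) :
    distToSet G v P = 0 :=
  Nat.sInf_eq_zero.2 (Or.inl ⟨v, h, dist_self⟩)

lemma distToSet_boxProd_prod_singleton {V₁ V₂ : Type*} {G : SimpleGraph V₁} {H : SimpleGraph V₂}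
    (hG : G.Connected) (hH : H.Connected) {P : Set V₁}
    (hP : P.Nonempty) (a : V₁) (b w : V₂) :
    distToSet (G □ H) (a, b) (P ×ˢ {w}) = distToSet G a P + H.dist b w := by
  have himage : (G □ H).dist (a, b) '' (P ×ˢ {w}) = (· + H.dist b w) '' (G.dist a '' P) := by
    simp only [Set.image_image, Set.prod_singleton, hG.dist_boxProd hH]
  rw [distToSet, distToSet, himage, ← (add_left_mono (a := H.dist b w)).map_csInf (hP.image _)]

section ProdPartition

variable {V₁ V₂ ι κ : Type*}

def prodPartition (A : ι → Set V₁) (u : κ → V₂) (i₀ : ι) (j₀ : κ) : Set (Set (V₁ × V₂)) :=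
  ((Set.range fun i => A i ×ˢ {u j₀}) ∪ (Set.range fun j => A i₀ ×ˢ {u j}) ∪
    {Set.univ \ ((Set.univ ×ˢ {u j₀}) ∪ (A i₀ ×ˢ Set.range u))}) \ {∅}

variable {A : ι → Set V₁} {u : κ → V₂} {i₀ : ι} {j₀ : κ}

lemma prod_singleton_mem_prodPartition_of_left {i : ι} (hi : (A i).Nonempty) :
    A i ×ˢ {u j₀} ∈ prodPartition A u i₀ j₀ :=
  ⟨.inl (.inl ⟨i, rfl⟩), (hi.prod (Set.singleton_nonempty _)).ne_empty⟩

lemma prod_singleton_mem_prodPartition_of_right (hi₀ : (A i₀).Nonempty) (j : κ) :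
    A i₀ ×ˢ {u j} ∈ prodPartition A u i₀ j₀ :=
  ⟨.inl (.inr ⟨j, rfl⟩), (hi₀.prod (Set.singleton_nonempty _)).ne_empty⟩

lemma exists_mem_prodPartition (hA : Setoid.IsPartition (Set.range A)) (x : V₁ × V₂) :
    ∃ Q ∈ prodPartition A u i₀ j₀, x ∈ Q := by
  obtain ⟨a, b⟩ := x
  obtain ⟨_, ⟨⟨i, rfl⟩, ha⟩, -⟩ := hA.2 a
  by_cases hb : b = u j₀
  · exact ⟨_, prod_singleton_mem_prodPartition_of_left ⟨a, ha⟩, ha, hb⟩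
  by_cases hab : a ∈ A i₀ ∧ b ∈ Set.range u
  · obtain ⟨ha₀, j, rfl⟩ := hab
    exact ⟨_, prod_singleton_mem_prodPartition_of_right ⟨a, ha₀⟩ j, ha₀, rfl⟩
  have hC : (a, b) ∈ Set.univ \ ((Set.univ ×ˢ {u j₀}) ∪ (A i₀ ×ˢ Set.range u)) :=
    ⟨trivial, by rintro (⟨-, hb'⟩ | hab') <;> contradiction⟩
  exact ⟨_, ⟨.inr rfl, (Set.nonempty_of_mem hC).ne_empty⟩, hC⟩

lemma eq_of_mem_prodPartition (hA : Setoid.IsPartition (Set.range A)) {x : V₁ × V₂}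
    {Q Q' : Set (V₁ × V₂)} (hQ : Q ∈ prodPartition A u i₀ j₀) (hQ' : Q' ∈ prodPartition A u i₀ j₀)
    (hx : x ∈ Q) (hx' : x ∈ Q') : Q = Q' := by
  have hA_eq {a : V₁} {i i' : ι} (hi : a ∈ A i) (hi' : a ∈ A i') : A i = A i' :=
    Setoid.eq_of_mem_eqv_class hA.2 ⟨i, rfl⟩ hi ⟨i', rfl⟩ hi'
  obtain ⟨a, b⟩ := x
  rcases hQ.1 with (⟨i, rfl⟩ | ⟨j, rfl⟩) | rfl <;> rcases hQ'.1 with (⟨i', rfl⟩ | ⟨j', rfl⟩) | rfl <;>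
    simp only [Set.mem_prod, Set.mem_singleton_iff, Set.mem_sdiff, Set.mem_union, Set.mem_range,
      Set.mem_univ, true_and, not_or] at hx hx'
  all_goals grind

lemma isPartition_prodPartition (hA : Setoid.IsPartition (Set.range A)) :
    Setoid.IsPartition (prodPartition A u i₀ j₀) :=
  ⟨fun h => h.2 rfl, fun x => existsUnique_of_exists_of_unique (exists_mem_prodPartition hA x)
    fun _ _ hQ hQ' => eq_of_mem_prodPartition hA hQ.1 hQ'.1 hQ.2 hQ'.2⟩

end ProdPartition

lemma IsResolvingPartition.eq_of_distToSet_add_dist_eq {V₁ V₂ ι κ : Type*} {G : SimpleGraph V₁}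
    {H : SimpleGraph V₂} {A : ι → Set V₁} {u : κ → V₂} (hA : IsResolvingPartition G (Set.range A))
    (hu : IsResolvingSet H (Set.range u)) {i₀ : ι} {j₀ : κ} {a c : V₁} {b d : V₂}
    (hrow : ∀ i, distToSet G a (A i) + H.dist b (u j₀) = distToSet G c (A i) + H.dist d (u j₀))
    (hcol : ∀ j, distToSet G a (A i₀) + H.dist b (u j) = distToSet G c (A i₀) + H.dist d (u j)) :
    a = c ∧ b = d := by
  obtain ⟨_, ⟨⟨ia, rfl⟩, ha⟩, -⟩ := hA.1.2 a
  obtain ⟨_, ⟨⟨ic, rfl⟩, hc⟩, -⟩ := hA.1.2 c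
  -- `d(a, A ia) = 0` and `d(c, A ic) = 0` turn the rows `ia` and `ic` into opposite inequalities
  have hrow_a := hrow ia
  have hrow_c := hrow ic
  rw [distToSet_eq_zero_of_mem_s6 ha] at hrow_a
  rw [distToSet_eq_zero_of_mem_s6 hc] at hrow_c
  have hbd : H.dist b (u j₀) = H.dist d (u j₀) := by omega
  have hac : a = c := by
    by_contra hac
    obtain ⟨_, ⟨i, rfl⟩, hi⟩ := hA.2 a c hac
    exact hi (by have := hrow i; omega)
  refine ⟨hac, ?_⟩
  subst hac
  by_contra hne
  obtain ⟨_, ⟨j, rfl⟩, hj⟩ := hu b d hne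
  exact hj (by have := hcol j; omega)

theorem stmt_6 {V₁ V₂ : Type*} (G₁ : SimpleGraph V₁) (G₂ : SimpleGraph V₂)
    (hG₁ : G₁.Connected) (hG₂ : G₂.Connected) {k t : ℕ}
    (A : Fin (k + 1) → Set V₁) (u : Fin (t + 1) → V₂)
    (hA : IsResolvingPartition G₁ (Set.range A))
    (hu : IsResolvingSet G₂ (Set.range u)) :
    IsResolvingPartition (G₁.boxProd G₂)
      (((Set.range fun i => A i ×ˢ ({u 0} : Set V₂)) ∪
        (Set.range fun j => A 0 ×ˢ ({u j} : Set V₂)) ∪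
        {Set.univ \ ((Set.univ ×ˢ ({u 0} : Set V₂)) ∪
          (A 0 ×ˢ (Set.range u : Set V₂)))}) \ {∅}) := by
  have hA_ne (i) : (A i).Nonempty := Setoid.nonempty_of_mem_partition hA.1 ⟨i, rfl⟩
  change IsResolvingPartition (G₁ □ G₂) (prodPartition A u 0 0)
  refine ⟨isPartition_prodPartition hA.1, ?_⟩
  rintro ⟨a, b⟩ ⟨c, d⟩ hne
  by_contra! hdist
  obtain ⟨rfl, rfl⟩ := hA.eq_of_distToSet_add_dist_eq hu (i₀ := 0) (j₀ := 0)
    (fun i => by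
      simpa only [distToSet_boxProd_prod_singleton hG₁ hG₂ (hA_ne i)] using
        hdist _ (prod_singleton_mem_prodPartition_of_left (hA_ne i)))
    (fun j => by
      simpa only [distToSet_boxProd_prod_singleton hG₁ hG₂ (hA_ne 0)] using
        hdist _ (prod_singleton_mem_prodPartition_of_right (hA_ne 0) j))
  exact hne rfl
end
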